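/- Let ξₙ, ξ : ℝ → ℝ be measurable, δ > 0, and T a real random variable with density g, and let W ∈ L²(Ω) with W ≥ 0. Suppose sup_s |ξₙ(s) − ξ(s)|·1_{g(s) > δ/2} → 0 in probability and E[ξ(T)² W² 1_{g(T) < 2δ}] → 0 as δ → 0. Then along a sequence δₙ → 0 chosen appropriately, E[(ξₙ(T)1_{ĝₙ(T)>δₙ} − ξ(T))² W²] → 0 in probability, provided additionally that {ĝₙ(T) > δₙ} ⊆ {g(T) > δₙ/2} and {ĝₙ(T) ≤ δₙ} ⊆ {g(T) < 2δₙ} eventually with probability tending to 1. -/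

import Mathlib

open MeasureTheory Filter Topology

/-!
Fix a training sample `ω'` on which `ξₙ` is `r`-close to `ξ` on `{g > δ/2}` and the truncation
events are sandwiched. Pointwise, the truncated error `(ξₙ(T) 1_{ĝₙ(T) > δ} − ξ(T))² W²` is then at
most `r² W²` where `ĝₙ(T) > δ` and equal to `ξ(T)² W²` on `{ĝₙ(T) ≤ δ} ⊆ {g(T) < 2δ}`, so its
integral is at most `r² E[W²] + E[ξ(T)² W² 1_{g(T) < 2δ}]`, which is `≤ ε` once `r` is small and
`δ` is small. The probability of the complementary samples tends to zero by assumption.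
-/

section LowDensityTail

variable {Ω : Type*} {mΩ : MeasurableSpace Ω} {μ : Measure Ω} {X W G : Ω → ℝ}

/-- `X² W² 1_{G < 2d}`; with `X = ξ ∘ T`, `G = g ∘ T` its expectation is the tail term. -/
noncomputable def lowDensityTail (X W G : Ω → ℝ) (d : ℝ) : Ω → ℝ :=
  fun ω => X ω ^ 2 * W ω ^ 2 * Set.indicator {ω | G ω < 2 * d} (fun _ => (1 : ℝ)) ω

lemma lowDensityTail_nonneg (d : ℝ) (ω : Ω) : 0 ≤ lowDensityTail X W G d ω :=
  mul_nonneg (by positivity) (Set.indicator_nonneg (fun _ _ => zero_le_one) ω)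

lemma lowDensityTail_mono {d d' : ℝ} (h : d ≤ d') (ω : Ω) :
    lowDensityTail X W G d ω ≤ lowDensityTail X W G d' ω := by
  refine mul_le_mul_of_nonneg_left ?_ (by positivity)
  exact Set.indicator_le_indicator_of_subset (fun ω (hω : G ω < 2 * d) => by
    change G ω < 2 * d'; linarith) (fun _ => zero_le_one) ω

lemma measurable_lowDensityTail (hX : Measurable X) (hW : Measurable W) (hG : Measurable G)
    (d : ℝ) : Measurable (lowDensityTail X W G d) :=
  ((hX.pow_const 2).mul (hW.pow_const 2)).mul
    (measurable_const.indicator (measurableSet_lt hG measurable_const))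

lemma MeasureTheory.Integrable.lowDensityTail_of_le {d d' : ℝ}
    (h : Integrable (lowDensityTail X W G d') μ) (hdd' : d ≤ d') (hX : Measurable X) (hW : Measurable W) (hG : Measurable G) :
    Integrable (lowDensityTail X W G d) μ :=
  h.mono' (measurable_lowDensityTail hX hW hG d).aestronglyMeasurable <|
    Eventually.of_forall fun ω => by
      rw [Real.norm_of_nonneg (lowDensityTail_nonneg d ω)]
      exact lowDensityTail_mono hdd' ω

end LowDensityTail

section TruncatedError

variable {Ω : Type*} {mΩ : MeasurableSpace Ω} {μ : Measure Ω} {X W G Xhat Ghat : Ω → ℝ} {δ r : ℝ}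

/-- A training sample off both exceptional events, with `Xhat = ξₙ ∘ T` and `Ghat = ĝₙ ∘ T`. -/
structure IsGoodSample (X W G Xhat Ghat : Ω → ℝ) (δ r : ℝ) : Prop where
  above : ∀ ω, δ < Ghat ω → δ / 2 < G ω
  below : ∀ ω, Ghat ω ≤ δ → G ω < 2 * δ
  close : ∀ ω, δ / 2 < G ω → |Xhat ω - X ω| ≤ r

noncomputable def truncSqErr (X W Xhat Ghat : Ω → ℝ) (δ : ℝ) : Ω → ℝ :=
  fun ω => ((if δ < Ghat ω then Xhat ω else 0) - X ω) ^ 2 * W ω ^ 2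

lemma IsGoodSample.truncSqErr_le (h : IsGoodSample X W G Xhat Ghat δ r) (ω : Ω) :
    truncSqErr X W Xhat Ghat δ ω ≤ r ^ 2 * W ω ^ 2 + lowDensityTail X W G δ ω := by
  unfold truncSqErr
  split_ifs with hGhat
  · have hclose : (Xhat ω - X ω) ^ 2 ≤ r ^ 2 := by
      simpa only [sq_abs] using pow_le_pow_left₀ (abs_nonneg _) (h.close ω (h.above ω hGhat)) 2
    exact le_add_of_le_of_nonneg (mul_le_mul_of_nonneg_right hclose (sq_nonneg _))
      (lowDensityTail_nonneg δ ω)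
  · have hlow : G ω < 2 * δ := h.below ω (not_lt.mp hGhat)
    rw [lowDensityTail, Set.indicator_of_mem (show ω ∈ {ω | G ω < 2 * δ} from hlow), zero_sub,
      neg_sq, mul_one]
    exact le_add_of_nonneg_left (by positivity)

lemma IsGoodSample.lowDensityTail_le_truncSqErr (h : IsGoodSample X W G Xhat Ghat δ r) (ω : Ω) :
    lowDensityTail X W G (δ / 4) ω ≤ truncSqErr X W Xhat Ghat δ ω := by
  unfold lowDensityTail truncSqErr
  by_cases hlow : G ω < 2 * (δ / 4)
  · have hGhat : ¬ δ < Ghat ω := fun hGhat => by linarith [h.above ω hGhat]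
    rw [if_neg hGhat, Set.indicator_of_mem (show ω ∈ {ω | G ω < 2 * (δ / 4)} from hlow)]
    rw [zero_sub, neg_sq, mul_one]
  · rw [Set.indicator_of_notMem (show ω ∉ {ω | G ω < 2 * (δ / 4)} from hlow), mul_zero]
    positivity

lemma IsGoodSample.integral_truncSqErr_le (h : IsGoodSample X W G Xhat Ghat δ r)
    (hW2 : Integrable (fun ω => W ω ^ 2) μ) (htail : Integrable (lowDensityTail X W G δ) μ) :
    ∫ ω, truncSqErr X W Xhat Ghat δ ω ∂μ
      ≤ r ^ 2 * ∫ ω, W ω ^ 2 ∂μ + ∫ ω, lowDensityTail X W G δ ω ∂μ := by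
  rw [← integral_const_mul, ← integral_add (hW2.const_mul _) htail]
  exact integral_mono_of_nonneg (Eventually.of_forall fun ω => by unfold truncSqErr; positivity)
    ((hW2.const_mul _).add htail) (Eventually.of_forall h.truncSqErr_le)

/-- If the tail is not integrable, neither is the truncated error, whose Bochner integral is then
the junk value `0`. -/
lemma IsGoodSample.integral_truncSqErr_eq_zero (h : IsGoodSample X W G Xhat Ghat δ r)
    (hX : Measurable X) (hW : Measurable W) (hG : Measurable G)
    (htail : ¬ Integrable (lowDensityTail X W G (δ / 4)) μ) :
    ∫ ω, truncSqErr X W Xhat Ghat δ ω ∂μ = 0 := by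
  refine integral_undef fun hint => htail ?_
  refine hint.mono' (measurable_lowDensityTail hX hW hG _).aestronglyMeasurable ?_
  exact Eventually.of_forall fun ω => by
    rw [Real.norm_of_nonneg (lowDensityTail_nonneg _ ω)]
    exact h.lowDensityTail_le_truncSqErr ω

lemma eventually_integral_truncSqErr_le (hX : Measurable X) (hW : Measurable W)
    (hG : Measurable G) (hW2 : Integrable (fun ω => W ω ^ 2) μ) {δ : ℕ → ℝ}
    (hδpos : ∀ n, 0 < δ n) (hδ0 : Tendsto δ atTop (𝓝 0)) {ε : ℝ} (hε : 0 ≤ ε)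
    (htail : ∃ d₀ > (0 : ℝ), ∀ d, 0 < d → d ≤ d₀ → ∫ ω, lowDensityTail X W G d ω ∂μ ≤ ε / 2)
    (hr : r ^ 2 * ∫ ω, W ω ^ 2 ∂μ ≤ ε / 2) :
    ∀ᶠ n in atTop, ∀ Xhat Ghat : Ω → ℝ, IsGoodSample X W G Xhat Ghat (δ n) r →
      ∫ ω, truncSqErr X W Xhat Ghat (δ n) ω ∂μ ≤ ε := by
  obtain ⟨d₀, hd₀, htail⟩ := htail
  by_cases hint : ∃ d₁ > 0, Integrable (lowDensityTail X W G d₁) μ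
  · obtain ⟨d₁, hd₁, hint⟩ := hint
    filter_upwards [hδ0.eventually (gt_mem_nhds (lt_min hd₀ hd₁))] with n hn Xhat Ghat hgood
    have hδn := lt_min_iff.mp hn
    have := htail (δ n) (hδpos n) hδn.1.le
    linarith [hgood.integral_truncSqErr_le hW2 (hint.lowDensityTail_of_le hδn.2.le hX hW hG)]
  · push Not at hint
    refine Eventually.of_forall fun n Xhat Ghat hgood => ?_
    rw [hgood.integral_truncSqErr_eq_zero hX hW hG (hint _ (by linarith [hδpos n]))]
    exact hε

end TruncatedError

lemma tendsto_measure_zero_of_eventually_subset_union {Ω : Type*} {mΩ : MeasurableSpace Ω}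
    {ν : Measure Ω} {A B C : ℕ → Set Ω} (h : ∀ᶠ n in atTop, A n ⊆ B n ∪ C n)
    (hB : Tendsto (fun n => ν (B n)) atTop (𝓝 0)) (hC : Tendsto (fun n => ν (C n)) atTop (𝓝 0)) :
    Tendsto (fun n => ν (A n)) atTop (𝓝 0) := by
  refine tendsto_of_tendsto_of_tendsto_of_le_of_le' tendsto_const_nhds (by simpa using hB.add hC)
    (Eventually.of_forall fun _ => zero_le) ?_
  filter_upwards [h] with n hn
  exact (measure_mono hn).trans (measure_union_le _ _)

lemma exists_pos_sq_mul_le {C ε : ℝ} (hC : 0 ≤ C) (hε : 0 < ε) : ∃ r > 0, r ^ 2 * C ≤ ε := by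
  refine ⟨Real.sqrt (ε / (C + 1)), Real.sqrt_pos.mpr (by positivity), ?_⟩
  rw [Real.sq_sqrt (by positivity), div_mul_eq_mul_div, div_le_iff₀ (by positivity)]
  nlinarith

theorem stmt18_general {Ω Ω' : Type*} {mΩ : MeasurableSpace Ω} {mΩ' : MeasurableSpace Ω'}
    {μ : Measure Ω} {ν : Measure Ω'}
    (T : Ω → ℝ) (hT : Measurable T)
    (W : Ω → ℝ) (hW : Measurable W)
    (hW2 : Integrable (fun ω => W ω ^ 2) μ)
    (g : ℝ → ℝ) (hg : Measurable g)
    (ξ : ℝ → ℝ) (hξ : Measurable ξ)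
    (ξn : ℕ → Ω' → ℝ → ℝ) (gn : ℕ → Ω' → ℝ → ℝ)
    (δ : ℕ → ℝ) (hδpos : ∀ n, 0 < δ n) (hδ0 : Tendsto δ atTop (nhds 0))
    (hsup : ∀ ε > (0 : ℝ), Tendsto
      (fun n => ν {ω' | ∃ s, δ n / 2 < g s ∧ ε < |ξn n ω' s - ξ s|}) atTop (nhds 0))
    (htail : ∀ ε > (0 : ℝ), ∃ d₀ > (0 : ℝ), ∀ d, 0 < d → d ≤ d₀ →
      ∫ ω, ξ (T ω) ^ 2 * W ω ^ 2 *
        Set.indicator {ω | g (T ω) < 2 * d} (fun _ => (1 : ℝ)) ω ∂μ ≤ ε)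
    (hsandwich : Tendsto (fun n => ν {ω' | ¬ ∀ ω,
      (δ n < gn n ω' (T ω) → δ n / 2 < g (T ω)) ∧
      (gn n ω' (T ω) ≤ δ n → g (T ω) < 2 * δ n)}) atTop (nhds 0)) :
    ∀ ε > (0 : ℝ), Tendsto (fun n => ν {ω' | ε <
      ∫ ω, ((if δ n < gn n ω' (T ω) then ξn n ω' (T ω) else 0) - ξ (T ω)) ^ 2 * W ω ^ 2 ∂μ})
      atTop (nhds 0) := by
  intro ε hε
  obtain ⟨r, hr, hrC⟩ := exists_pos_sq_mul_le (C := ∫ ω, W ω ^ 2 ∂μ)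
    (integral_nonneg fun ω => sq_nonneg (W ω)) (half_pos hε)
  have hsmall := eventually_integral_truncSqErr_le (hξ.comp hT) hW (hg.comp hT) hW2 hδpos hδ0
    hε.le (htail (ε / 2) (half_pos hε)) hrC
  refine tendsto_measure_zero_of_eventually_subset_union ?_ (hsup r hr) hsandwich
  filter_upwards [hsmall] with n hn ω' hω'
  by_contra hbad
  simp only [Set.mem_union, Set.mem_ofPred_eq, not_or, not_exists, not_and, not_lt,
    not_not] at hbad
  obtain ⟨hclose, hsandw⟩ := hbad
  exact (hn _ _ ⟨fun ω => (hsandw ω).1, fun ω => (hsandw ω).2,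
    fun ω hω => hclose (T ω) hω⟩).not_gt hω'

/-- The cut-off argument in the construction of the estimated score: if the estimated score
`ξₙ` (built from a training sample `ω' ∈ Ω'`) converges uniformly in probability to `ξ = g'/g`
on `{g > δₙ/2}`, the tail term `E[ξ(T)² W² 1_{g(T) < 2δ}] → 0` as `δ → 0`, and the estimated
density truncation events are eventually sandwiched, `{ĝₙ > δₙ} ⊆ {g > δₙ/2}` and
`{ĝₙ ≤ δₙ} ⊆ {g < 2δₙ}`, then `E[(ξₙ(T) 1_{ĝₙ(T) > δₙ} − ξ(T))² W²] → 0` in probability. -/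
theorem stmt18 {Ω Ω' : Type*} {mΩ : MeasurableSpace Ω} {mΩ' : MeasurableSpace Ω'}
    {μ : Measure Ω} [IsProbabilityMeasure μ] {ν : Measure Ω'} [IsProbabilityMeasure ν]
    (T : Ω → ℝ) (hT : Measurable T)
    (W : Ω → ℝ) (hW : Measurable W) (hWpos : ∀ ω, 0 ≤ W ω)
    (hW2 : Integrable (fun ω => W ω ^ 2) μ)
    (g : ℝ → ℝ) (hg : Measurable g)
    (ξ : ℝ → ℝ) (hξ : Measurable ξ)
    (ξn : ℕ → Ω' → ℝ → ℝ) (gn : ℕ → Ω' → ℝ → ℝ)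
    (δ : ℕ → ℝ) (hδpos : ∀ n, 0 < δ n) (hδ0 : Tendsto δ atTop (nhds 0))
    (hsup : ∀ ε > (0 : ℝ), Tendsto
      (fun n => ν {ω' | ∃ s, δ n / 2 < g s ∧ ε < |ξn n ω' s - ξ s|}) atTop (nhds 0))
    (htail : ∀ ε > (0 : ℝ), ∃ d₀ > (0 : ℝ), ∀ d, 0 < d → d ≤ d₀ →
      ∫ ω, ξ (T ω) ^ 2 * W ω ^ 2 *
        Set.indicator {ω | g (T ω) < 2 * d} (fun _ => (1 : ℝ)) ω ∂μ ≤ ε)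
    (hsandwich : Tendsto (fun n => ν {ω' | ¬ ∀ ω,
      (δ n < gn n ω' (T ω) → δ n / 2 < g (T ω)) ∧
      (gn n ω' (T ω) ≤ δ n → g (T ω) < 2 * δ n)}) atTop (nhds 0)) :
    ∀ ε > (0 : ℝ), Tendsto (fun n => ν {ω' | ε <
      ∫ ω, ((if δ n < gn n ω' (T ω) then ξn n ω' (T ω) else 0) - ξ (T ω)) ^ 2 * W ω ^ 2 ∂μ})
      atTop (nhds 0) :=
  stmt18_general (mΩ := mΩ) (mΩ' := mΩ') T hT W hW hW2 g hg ξ hξ ξn gn δ hδpos hδ0 hsup htail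
    hsandwich
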